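/- arXiv:cs/0207050 — 2 statements merged into one kernel-verified Lean document; each statement's English description precedes it below -/
import Mathlib

section
/- If every operator in R is a constant function, then CL↓(d, L ∪ R) = CL↓(CL↓(d,R), L), i.e., the constant operators may be applied first. -/
/-! For a constant `r` the condition `e ⊆ r e` says only `e ⊆ r ∅`, so every subset of
`CL d R` already satisfies all constraints from `R`; imposing them first therefore loses nothing. -/

def CL {α : Type*} (d : Set α) (F : Set (Set α → Set α)) : Set α :=
  ⋃₀ {e | e ⊆ d ∧ ∀ f ∈ F, e ⊆ f e}

section

variable {α : Type*} {d e : Set α} {F G : Set (Set α → Set α)}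

theorem CL_subset : CL d F ⊆ d :=
  Set.sUnion_subset fun _ he => he.1

theorem subset_CL (hed : e ⊆ d) (he : ∀ f ∈ F, e ⊆ f e) : e ⊆ CL d F :=
  Set.subset_sUnion_of_mem ⟨hed, he⟩

theorem CL_union_subset_CL_CL : CL d (F ∪ G) ⊆ CL (CL d G) F :=
  Set.sUnion_subset fun _ ⟨hed, he⟩ =>
    subset_CL (subset_CL hed fun g hg => he g (Or.inr hg)) fun f hf => he f (Or.inl hf)

theorem CL_subset_apply_of_const {r : Set α → Set α} (hrF : r ∈ F)
    (hr : ∀ e e' : Set α, r e = r e') (e : Set α) : CL d F ⊆ r e :=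
  Set.sUnion_subset fun e' he' => (he'.2 r hrF).trans (hr e' e).le

end

theorem CL_constants_first_general {α : Type*}
    (d : Set α) (L R : Set (Set α → Set α))
    (hR : ∀ r ∈ R, ∀ e e' : Set α, r e = r e') :
    CL d (L ∪ R) = CL (CL d R) L := by
  refine CL_union_subset_CL_CL.antisymm (Set.sUnion_subset fun e ⟨heR, heL⟩ => ?_)
  refine subset_CL (heR.trans CL_subset) ?_
  rintro f (hfL | hfR)
  · exact heL f hfL
  · exact heR.trans (CL_subset_apply_of_const hfR (hR f hfR) e)

theorem CL_constants_first {α : Type*} [Finite α]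
    (d : Set α) (L R : Set (Set α → Set α))
    (hL : ∀ f ∈ L, Monotone f)
    (hR : ∀ r ∈ R, ∀ e e' : Set α, r e = r e') :
    CL d (L ∪ R) = CL (CL d R) L :=
  CL_constants_first_general d L R hR
end

section
/- If t ⊆ d is a solution of the CSP, {d_i | 1 ≤ i ≤ n} is a partition of d on x, and every operator in L is a local consistency operator that is correct for the CSP (i.e., every solution s with s ⊆ e satisfies s ⊆ f(e) for all f ∈ L and e ⊆ 𝔻), then t ⊆ ⋃_{1≤i≤n} CL↓(d_i, L). -/
def restrict {V E : Type*} (d : Set (V × E)) (W : Set V) : Set (V × E) :=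
  {p ∈ d | p.1 ∈ W}

structure CSP (V E : Type*) where
  C : Type*
  var : C → Set V
  Dx : V → Set E
  Dx_finite : ∀ x, (Dx x).Finite
  Dx_nonempty : ∀ x, (Dx x).Nonempty
  T : C → Set (Set (V × E))

def CSP.Dom {V E : Type*} (P : CSP V E) : Set (V × E) :=
  {p | p.2 ∈ P.Dx p.1}

def CSP.IsTuple {V E : Type*} (P : CSP V E) (t : Set (V × E)) (W : Set V) : Prop :=
  t ⊆ restrict P.Dom W ∧ ∀ x ∈ W, ∃! e : E, (x, e) ∈ t

def CSP.IsSolution {V E : Type*} (P : CSP V E) (t : Set (V × E)) : Prop :=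
  P.IsTuple t Set.univ ∧ ∀ c, restrict t (P.var c) ∈ P.T c

def IsPartitionOn {V E : Type*} (d : Set (V × E)) (x : V) {n : ℕ}
    (ds : Fin n → Set (V × E)) : Prop :=
  (∀ i, restrict d {x}ᶜ ⊆ restrict (ds i) {x}ᶜ) ∧
  restrict d {x} ⊆ ⋃ i, restrict (ds i) {x} ∧
  ∀ i j, i ≠ j → restrict (ds i) {x} ∩ restrict (ds j) {x} = ∅

/-! A solution `t ⊆ d` takes a single value at `x`, so it lies entirely in the part `dᵢ` whose
`x`-slice contains that value. Correctness applied to `e = t` gives `t ⊆ f t` for every `f ∈ L`,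
so `t` is one of the sets whose union is `CL↓(dᵢ, L)`. -/

theorem subset_CL_s13 {α : Type*} {s d : Set α} {F : Set (Set α → Set α)} (hsd : s ⊆ d)
    (hs : ∀ f ∈ F, s ⊆ f s) : s ⊆ CL d F :=
  Set.subset_sUnion_of_mem ⟨hsd, hs⟩

theorem CSP.IsSolution.subset_dom {V E : Type*} {P : CSP V E} {t : Set (V × E)}
    (ht : P.IsSolution t) : t ⊆ P.Dom :=
  fun _ hp => (ht.1.1 hp).1

theorem IsPartitionOn.exists_subset_of_existsUnique {V E : Type*} {d t : Set (V × E)} {x : V}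
    {n : ℕ} {ds : Fin n → Set (V × E)} (hp : IsPartitionOn d x ds) (htd : t ⊆ d)
    (hx : ∃! e, (x, e) ∈ t) : ∃ i, t ⊆ ds i := by
  obtain ⟨e, he, huniq⟩ := hx
  obtain ⟨_, ⟨i, rfl⟩, hxe, -⟩ := hp.2.1 ⟨htd he, rfl⟩
  refine ⟨i, fun ⟨y, v⟩ hyv => ?_⟩
  by_cases hy : y = x
  · subst hy
    rwa [huniq v hyv]
  · exact (hp.1 i ⟨htd hyv, hy⟩).1

theorem partition_CL_preserves_solutions_general {V E : Type*}
    (P : CSP V E) (t d : Set (V × E)) (x : V) {n : ℕ}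
    (ds : Fin n → Set (V × E))
    (L : Set (Set (V × E) → Set (V × E)))
    (hcorrect : ∀ f ∈ L, ∀ s : Set (V × E), P.IsSolution s →
      ∀ e ⊆ P.Dom, s ⊆ e → s ⊆ f e)
    (ht : P.IsSolution t) (htd : t ⊆ d)
    (hp : IsPartitionOn d x ds) :
    t ⊆ ⋃ i, CL (ds i) L := by
  obtain ⟨i, hti⟩ := hp.exists_subset_of_existsUnique htd (ht.1.2 x (Set.mem_univ x))
  have hfixed : ∀ f ∈ L, t ⊆ f t := fun f hf => hcorrect f hf t ht t ht.subset_dom subset_rfl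
  exact (subset_CL_s13 hti hfixed).trans (Set.subset_iUnion (fun i => CL (ds i) L) i)

theorem partition_CL_preserves_solutions {V E : Type*} [Finite V] [Finite E]
    (P : CSP V E) (t d : Set (V × E)) (x : V) {n : ℕ}
    (ds : Fin n → Set (V × E))
    (L : Set (Set (V × E) → Set (V × E)))
    (hL : ∀ f ∈ L, Monotone f)
    (hcorrect : ∀ f ∈ L, ∀ s : Set (V × E), P.IsSolution s →
      ∀ e ⊆ P.Dom, s ⊆ e → s ⊆ f e)
    (ht : P.IsSolution t) (htd : t ⊆ d) (hd : d ⊆ P.Dom)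
    (hp : IsPartitionOn d x ds) :
    t ⊆ ⋃ i, CL (ds i) L :=
  partition_CL_preserves_solutions_general P t d x ds L hcorrect ht htd hp
end
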